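/- arXiv:2605.02879 — 5 statements merged into one kernel-verified Lean document; each statement's English description precedes it below -/
import Mathlib

section
/- Let ℓ, φ₀, φ₁ be positive real numbers with φ₀ ≥ φ₁, and set α := (1/ℓ)·arcosh(φ₀/φ₁) and β := (1/ℓ)·log(φ₀/φ₁). Define φ : ℝ → ℝ by φ(x) := φ₁·cosh(α·(ℓ − x)). Then: (i) φ is non-increasing on [0, ℓ]; (ii) φ(0) = φ₀, φ(ℓ) = φ₁ and φ′(ℓ) = 0; (iii) φ″(x) = α²·φ(x) for every x; and (iv) 0 < φ(x) ≤ φ₀·exp(−β·x) for all x ∈ [0, ℓ]. -/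
/-!
The only estimate is `cosh (θ a) ≤ (cosh a) ^ θ` for `θ ∈ [0, 1]`: as `cosh a` is the average of
`exp a` and `exp (-a)`, this is concavity of `t ↦ t ^ θ`. With `θ = (ℓ - x) / ℓ` and `a = α ℓ`,
where `cosh (α ℓ) = φ₀ / φ₁`, it becomes `φ x ≤ φ₀ exp (-β x)`. The rest is calculus.
-/

open Real Set

noncomputable def arcosh (y : ℝ) : ℝ := Real.log (y + Real.sqrt (y ^ 2 - 1))

theorem arcosh_eq_real_arcosh (y : ℝ) : _root_.arcosh y = Real.arcosh y := rfl

theorem cosh_mul_le_cosh_rpow {θ : ℝ} (h₀ : 0 ≤ θ) (h₁ : θ ≤ 1) (a : ℝ) :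
    cosh (θ * a) ≤ cosh a ^ θ :=
  calc cosh (θ * a) = 1 / 2 * exp a ^ θ + 1 / 2 * exp (-a) ^ θ := by
        rw [← exp_mul, ← exp_mul, cosh_eq]; ring_nf
    _ ≤ (1 / 2 * exp a + 1 / 2 * exp (-a)) ^ θ := by
        simpa only [smul_eq_mul] using (concaveOn_rpow h₀ h₁).2 (mem_Ici.2 (exp_pos a).le)
          (mem_Ici.2 (exp_pos (-a)).le) (by norm_num) (by norm_num) (by norm_num)
    _ = cosh a ^ θ := by rw [cosh_eq]; ring_nf

theorem cosh_mul_sub_le_mul_exp {α ℓ x : ℝ} (hℓ : 0 < ℓ) (hx : x ∈ Icc 0 ℓ) :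
    cosh (α * (ℓ - x)) ≤ cosh (α * ℓ) * exp (-(log (cosh (α * ℓ)) / ℓ) * x) := by
  have hθ₀ : 0 ≤ (ℓ - x) / ℓ := div_nonneg (by linarith [hx.2]) hℓ.le
  have hθ₁ : (ℓ - x) / ℓ ≤ 1 := (div_le_one hℓ).2 (by linarith [hx.1])
  calc cosh (α * (ℓ - x)) = cosh ((ℓ - x) / ℓ * (α * ℓ)) := by field_simp
    _ ≤ cosh (α * ℓ) ^ ((ℓ - x) / ℓ) := cosh_mul_le_cosh_rpow hθ₀ hθ₁ _
    _ = cosh (α * ℓ) * exp (-(log (cosh (α * ℓ)) / ℓ) * x) := by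
      rw [rpow_def_of_pos (cosh_pos _), ← exp_log (cosh_pos (α * ℓ)), ← exp_add, log_exp]
      congr 1
      field_simp
      ring

theorem hasDerivAt_const_mul_cosh_mul_sub (c a b x : ℝ) :
    HasDerivAt (fun x => c * cosh (a * (b - x))) (-(c * a) * sinh (a * (b - x))) x :=
  (((hasDerivAt_id' x).const_sub b).const_mul a).cosh.const_mul c |>.congr_deriv (by ring)

theorem hasDerivAt_const_mul_sinh_mul_sub (c a b x : ℝ) :
    HasDerivAt (fun x => c * sinh (a * (b - x))) (-(c * a) * cosh (a * (b - x))) x :=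
  (((hasDerivAt_id' x).const_sub b).const_mul a).sinh.const_mul c |>.congr_deriv (by ring)

theorem antitoneOn_const_mul_cosh_mul_sub {c a : ℝ} (hc : 0 ≤ c) (ha : 0 ≤ a) (b : ℝ) :
    AntitoneOn (fun x => c * cosh (a * (b - x))) (Iic b) := by
  intro x hx y hy hxy
  refine mul_le_mul_of_nonneg_left (cosh_le_cosh.2 ?_) hc
  rw [abs_of_nonneg (mul_nonneg ha (sub_nonneg.2 hy)),
    abs_of_nonneg (mul_nonneg ha (sub_nonneg.2 hx))]
  exact mul_le_mul_of_nonneg_left (by linarith) ha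

theorem stmt_0_general (ℓ φ₀ φ₁ : ℝ) (hℓ : 0 < ℓ) (hφ₁ : 0 < φ₁)
    (h01 : φ₁ ≤ φ₀)
    (α β : ℝ) (hα : α = (1 / ℓ) * _root_.arcosh (φ₀ / φ₁))
    (hβ : β = (1 / ℓ) * Real.log (φ₀ / φ₁))
    (φ : ℝ → ℝ) (hφ : φ = fun x => φ₁ * Real.cosh (α * (ℓ - x))) :
    AntitoneOn φ (Set.Icc 0 ℓ) ∧
    φ 0 = φ₀ ∧ φ ℓ = φ₁ ∧ deriv φ ℓ = 0 ∧
    (∀ x, deriv (deriv φ) x = α ^ 2 * φ x) ∧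
    (∀ x ∈ Set.Icc 0 ℓ, 0 < φ x ∧ φ x ≤ φ₀ * Real.exp (-β * x)) := by
  have hratio : 1 ≤ φ₀ / φ₁ := (one_le_div hφ₁).2 h01
  have hαℓ : α * ℓ = Real.arcosh (φ₀ / φ₁) := by
    rw [hα, arcosh_eq_real_arcosh]; field_simp
  have hcosh : cosh (α * ℓ) = φ₀ / φ₁ := by rw [hαℓ, Real.cosh_arcosh hratio]
  have hα₀ : 0 ≤ α := by
    rw [hα, arcosh_eq_real_arcosh]; exact mul_nonneg (by positivity) (Real.arcosh_nonneg hratio)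
  have hderiv : deriv φ = fun x => -(φ₁ * α) * sinh (α * (ℓ - x)) := by
    ext x; rw [hφ]; exact (hasDerivAt_const_mul_cosh_mul_sub φ₁ α ℓ x).deriv
  subst hφ
  refine ⟨?_, ?_, by simp, by simp [hderiv], fun x => ?_, fun x hx => ⟨by positivity, ?_⟩⟩
  · exact (antitoneOn_const_mul_cosh_mul_sub hφ₁.le hα₀ ℓ).mono Icc_subset_Iic_self
  · simp only [sub_zero, hcosh]; field_simp
  · rw [hderiv, (hasDerivAt_const_mul_sinh_mul_sub _ α ℓ x).deriv]
    ring
  · calc φ₁ * cosh (α * (ℓ - x))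
        ≤ φ₁ * (cosh (α * ℓ) * exp (-(log (cosh (α * ℓ)) / ℓ) * x)) :=
          mul_le_mul_of_nonneg_left (cosh_mul_sub_le_mul_exp hℓ hx) hφ₁.le
      _ = φ₀ * exp (-β * x) := by rw [hcosh, hβ]; field_simp

/-- Construction of the comparison function on a bounded edge
(Lemma `lem:exp-bound` of the paper). -/
theorem stmt_0 (ℓ φ₀ φ₁ : ℝ) (hℓ : 0 < ℓ) (hφ₀ : 0 < φ₀) (hφ₁ : 0 < φ₁)
    (h01 : φ₁ ≤ φ₀)
    (α β : ℝ) (hα : α = (1 / ℓ) * _root_.arcosh (φ₀ / φ₁))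
    (hβ : β = (1 / ℓ) * Real.log (φ₀ / φ₁))
    (φ : ℝ → ℝ) (hφ : φ = fun x => φ₁ * Real.cosh (α * (ℓ - x))) :
    AntitoneOn φ (Set.Icc 0 ℓ) ∧
    φ 0 = φ₀ ∧ φ ℓ = φ₁ ∧ deriv φ ℓ = 0 ∧
    (∀ x, deriv (deriv φ) x = α ^ 2 * φ x) ∧
    (∀ x ∈ Set.Icc 0 ℓ, 0 < φ x ∧ φ x ≤ φ₀ * Real.exp (-β * x)) :=
  stmt_0_general ℓ φ₀ φ₁ hℓ hφ₁ h01 α β hα hβ φ hφ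
end

section
/- Let p > 2, λ ∈ ℝ and L > 0. Suppose v : ℝ → ℝ is twice continuously differentiable on [0, L], satisfies −v″(x) + λ·v(x) = |v(x)|^{p−2}·v(x) for every x ∈ [0, L], v(0) = v(L) = 0, and v(x) > 0 for all x ∈ (0, L). Then v is symmetric about the midpoint: v(x) = v(L − x) for every x ∈ [0, L]; in particular v′(0) = −v′(L). -/
/-!
Rolle's theorem gives a critical point `c` of `v`. The equation `v'' = f(v)` is autonomous and
invariant under `x ↦ 2c - x`, so `x ↦ (v (2c - x), -v' (2c - x))` solves the same first-order
system as `(v, v')` with the same value at `c`; since `u ↦ |u|^(p-2) u` is `C¹` for `p > 2`,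
uniqueness for the Cauchy problem makes `v` symmetric about `c` on the largest interval around `c`
inside `[0, L]`. Symmetry carries the zero at the nearer endpoint to the reflected point, and
positivity of `v` inside forces that point to be the other endpoint, so `c = L / 2`.
-/

open Set Asymptotics Topology

theorem hasDerivAt_abs_rpow_mul_self {q : ℝ} (hq : 0 < q) (u : ℝ) :
    HasDerivAt (fun x : ℝ => |x| ^ q * x) ((q + 1) * |u| ^ q) u := by
  have hpos : ∀ u > 0, HasDerivAt (fun x : ℝ => |x| ^ q * x) ((q + 1) * |u| ^ q) u := by
    intro u hu
    have hpow : (fun x : ℝ => x ^ (q + 1)) =ᶠ[𝓝 u] fun x : ℝ => |x| ^ q * x := by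
      filter_upwards [Ioi_mem_nhds hu] with x hx
      rw [abs_of_pos hx, Real.rpow_add_one hx.ne']
    simpa [abs_of_pos hu] using
      (Real.hasDerivAt_rpow_const (p := q + 1) (Or.inl hu.ne')).congr_of_eventuallyEq hpow.symm
  rcases lt_trichotomy u 0 with hu | rfl | hu
  · have hodd := ((hpos (-u) (neg_pos.2 hu)).comp u (hasDerivAt_neg u)).neg
    refine (hodd.congr_of_eventuallyEq (.of_forall fun x => ?_)).congr_deriv ?_
    · simp [abs_neg]
    · rw [abs_neg]; ring
  · have hsmall : (fun x : ℝ => |x| ^ q) =o[𝓝 0] fun _ => (1 : ℝ) := by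
      refine (isLittleO_one_iff ℝ).2 ?_
      simpa [Real.zero_rpow hq.ne'] using
        ((continuous_abs.rpow_const fun _ => Or.inr hq.le).tendsto (0 : ℝ))
    rw [hasDerivAt_iff_isLittleO]
    simpa [Real.zero_rpow hq.ne'] using hsmall.mul_isBigO (isBigO_refl (fun x : ℝ => x) (𝓝 0))
  · exact hpos u hu

theorem contDiff_abs_rpow_mul_self {q : ℝ} (hq : 0 < q) :
    ContDiff ℝ 1 (fun x : ℝ => |x| ^ q * x) := by
  refine contDiff_one_iff_deriv.2
    ⟨fun u => (hasDerivAt_abs_rpow_mul_self hq u).differentiableAt, ?_⟩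
  rw [funext fun u => (hasDerivAt_abs_rpow_mul_self hq u).deriv]
  exact continuous_const.mul (continuous_abs.rpow_const fun _ => Or.inr hq.le)

theorem reflect_eq_of_deriv_eq_zero {f : ℝ → ℝ} (hf : LocallyLipschitz f) {v v' : ℝ → ℝ}
    {c r : ℝ} (hr : 0 < r) (hv : ContinuousOn v (Icc (c - r) (c + r)))
    (hv' : ContinuousOn v' (Icc (c - r) (c + r)))
    (hdv : ∀ x ∈ Ioo (c - r) (c + r), HasDerivAt v (v' x) x)
    (hdv' : ∀ x ∈ Ioo (c - r) (c + r), HasDerivAt v' (f (v x)) x) (hc : v' c = 0) :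
    ∀ x ∈ Icc (c - r) (c + r), v (2 * c - x) = v x ∧ v' (2 * c - x) = -v' x := by
  set F : ℝ × ℝ → ℝ × ℝ := fun z => (z.2, f z.1)
  set γ : ℝ → ℝ × ℝ := fun x => (v x, v' x)
  set γrev : ℝ → ℝ × ℝ := fun x => (v (2 * c - x), -v' (2 * c - x))
  have hIcc : MapsTo (2 * c - ·) (Icc (c - r) (c + r)) (Icc (c - r) (c + r)) :=
    fun x hx => ⟨by linarith [hx.2], by linarith [hx.1]⟩
  have hIoo : MapsTo (2 * c - ·) (Ioo (c - r) (c + r)) (Ioo (c - r) (c + r)) :=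
    fun x hx => ⟨by linarith [hx.2], by linarith [hx.1]⟩
  have hγrev : ContinuousOn γrev (Icc (c - r) (c + r)) :=
    (hv.comp (by fun_prop) hIcc).prodMk (hv'.comp (by fun_prop) hIcc).neg
  have hdγ : ∀ x ∈ Ioo (c - r) (c + r), HasDerivAt γ (F (γ x)) x :=
    fun x hx => (hdv x hx).prodMk (hdv' x hx)
  have hdγrev : ∀ x ∈ Ioo (c - r) (c + r), HasDerivAt γrev (F (γrev x)) x := fun x hx =>
    ((hdv _ (hIoo hx)).comp_const_sub (2 * c) x).prodMk
      ((hdv' _ (hIoo hx)).comp_const_sub (2 * c) x).neg |>.congr_deriv (by simp [F, γrev])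
  obtain ⟨R, hR⟩ := isCompact_Icc.exists_bound_of_continuousOn (hv.prodMk hv')
  have hγR : ∀ x ∈ Ioo (c - r) (c + r), γ x ∈ Metric.closedBall 0 R := fun x hx =>
    mem_closedBall_zero_iff.2 (hR x (Ioo_subset_Icc_self hx))
  have hγrevR : ∀ x ∈ Ioo (c - r) (c + r), γrev x ∈ Metric.closedBall 0 R := fun x hx => by
    simpa [γrev] using hR _ (Ioo_subset_Icc_self (hIoo hx))
  have hF : LocallyLipschitz F :=
    LipschitzWith.prod_snd.locallyLipschitz.prodMk (hf.comp LipschitzWith.prod_fst.locallyLipschitz)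
  obtain ⟨K, hK⟩ := hF.locallyLipschitzOn.exists_lipschitzOnWith_of_compact
    (isCompact_closedBall (0 : ℝ × ℝ) R)
  have hγc : γ c = γrev c := by simp [γ, γrev, hc, show 2 * c - c = c by ring]
  have hEq := ODE_solution_unique_of_mem_Icc (v := fun _ => F) (fun _ _ => hK)
    ⟨sub_lt_self c hr, lt_add_of_pos_right c hr⟩
    (hv.prodMk hv') hdγ hγR hγrev hdγrev hγrevR hγc
  intro x hx
  obtain ⟨h1, h2⟩ := Prod.ext_iff.1 (hEq hx)
  exact ⟨h1.symm, by simp only [γrev] at h2; linarith⟩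

theorem two_mul_eq_of_reflect_eq {v : ℝ → ℝ} {c L : ℝ} (hc : c ∈ Ioo 0 L) (h0 : v 0 = 0)
    (hL : v L = 0) (hpos : ∀ x ∈ Ioo 0 L, 0 < v x)
    (hsym : ∀ x ∈ Icc (c - min c (L - c)) (c + min c (L - c)), v (2 * c - x) = v x) :
    2 * c = L := by
  by_contra hne
  rcases le_total c (L - c) with h | h
  · rw [min_eq_left h] at hsym
    have hzero : v (2 * c) = 0 := by simpa [h0] using hsym 0 ⟨by simp, by linarith [hc.1]⟩
    exact (hpos (2 * c) ⟨by linarith [hc.1], lt_of_le_of_ne (by linarith) hne⟩).ne' hzero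
  · rw [min_eq_right h] at hsym
    have hzero : v (2 * c - L) = 0 := hL ▸ hsym L ⟨by linarith [hc.2], by linarith⟩
    exact (hpos (2 * c - L) ⟨sub_pos.2 (lt_of_le_of_ne (by linarith) (Ne.symm hne)),
      by linarith [hc.2]⟩).ne' hzero

theorem stmt_6_general (p lam L : ℝ) (hp : 2 < p) (hL : 0 < L)
    (v v' v'' : ℝ → ℝ)
    (hv : ∀ x ∈ Set.Icc 0 L, HasDerivWithinAt v (v' x) (Set.Icc 0 L) x)
    (hv' : ∀ x ∈ Set.Icc 0 L, HasDerivWithinAt v' (v'' x) (Set.Icc 0 L) x)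
    (heq : ∀ x ∈ Set.Icc 0 L, -v'' x + lam * v x = |v x| ^ (p - 2) * v x)
    (h0 : v 0 = 0) (hLval : v L = 0)
    (hpos : ∀ x ∈ Set.Ioo 0 L, 0 < v x) :
    (∀ x ∈ Set.Icc 0 L, v x = v (L - x)) ∧ v' 0 = -v' L := by
  have hdv : ∀ x ∈ Ioo 0 L, HasDerivAt v (v' x) x := fun x hx =>
    (hv x (Ioo_subset_Icc_self hx)).hasDerivAt (Icc_mem_nhds hx.1 hx.2)
  have hdv' : ∀ x ∈ Ioo 0 L, HasDerivAt v' (lam * v x - |v x| ^ (p - 2) * v x) x := fun x hx =>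
    ((hv' x (Ioo_subset_Icc_self hx)).hasDerivAt (Icc_mem_nhds hx.1 hx.2)).congr_deriv
      (by linarith [heq x (Ioo_subset_Icc_self hx)])
  have hvc : ContinuousOn v (Icc 0 L) := fun x hx => (hv x hx).continuousWithinAt
  have hv'c : ContinuousOn v' (Icc 0 L) := fun x hx => (hv' x hx).continuousWithinAt
  obtain ⟨c, hc, hc0⟩ := exists_hasDerivAt_eq_zero hL hvc (h0.trans hLval.symm) hdv
  have hrc := min_le_left c (L - c)
  have hrL := min_le_right c (L - c)
  have hf : LocallyLipschitz fun u : ℝ => lam * u - |u| ^ (p - 2) * u :=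
    ((contDiff_const.mul contDiff_id).sub
      (contDiff_abs_rpow_mul_self (by linarith))).locallyLipschitz
  have hsym := reflect_eq_of_deriv_eq_zero hf (lt_min hc.1 (sub_pos.2 hc.2))
    (hvc.mono (Icc_subset_Icc (by linarith) (by linarith)))
    (hv'c.mono (Icc_subset_Icc (by linarith) (by linarith)))
    (fun x hx => hdv x (Ioo_subset_Ioo (by linarith) (by linarith) hx))
    (fun x hx => hdv' x (Ioo_subset_Ioo (by linarith) (by linarith) hx)) hc0
  have hmid := two_mul_eq_of_reflect_eq hc h0 hLval hpos fun x hx => (hsym x hx).1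
  rw [min_eq_left (by linarith), sub_self, ← two_mul, hmid] at hsym
  refine ⟨fun x hx => ((hsym x hx).1).symm, ?_⟩
  have hderiv : v' L = -v' 0 := by simpa using (hsym 0 ⟨le_rfl, hL.le⟩).2
  linarith

/-- A positive Dirichlet solution of the NLS ODE `−v″ + λv = |v|^{p−2}v`
on `[0, L]` is symmetric about the midpoint; in particular `v′(0) = −v′(L)`. -/
theorem stmt_6 (p lam L : ℝ) (hp : 2 < p) (hL : 0 < L)
    (v v' v'' : ℝ → ℝ)
    (hv : ∀ x ∈ Set.Icc 0 L, HasDerivWithinAt v (v' x) (Set.Icc 0 L) x)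
    (hv' : ∀ x ∈ Set.Icc 0 L, HasDerivWithinAt v' (v'' x) (Set.Icc 0 L) x)
    (hv'' : ContinuousOn v'' (Set.Icc 0 L))
    (heq : ∀ x ∈ Set.Icc 0 L, -v'' x + lam * v x = |v x| ^ (p - 2) * v x)
    (h0 : v 0 = 0) (hLval : v L = 0)
    (hpos : ∀ x ∈ Set.Ioo 0 L, 0 < v x) :
    (∀ x ∈ Set.Icc 0 L, v x = v (L - x)) ∧ v' 0 = -v' L :=
  stmt_6_general p lam L hp hL v v' v'' hv hv' heq h0 hLval hpos
end

section
/- Let p > 2 and α, β > 0, and let W, ρ : ℝ → ℝ be measurable functions with W(x) ≥ α and 0 ≤ ρ(x) ≤ β for almost every x ∈ ℝ. Let u : ℝ → ℝ be continuously differentiable with locally Lipschitz derivative and satisfy −u″(x) + W(x)·u(x) = ρ(x)·|u(x)|^{p−2}·u(x) for almost every x ∈ ℝ (u″ being the almost-everywhere derivative of u′). If x̄ ∈ ℝ is a local maximum point of |u| (i.e. there is δ > 0 with |u(y)| ≤ |u(x̄)| for all y with |y − x̄| ≤ δ) and u(x̄) ≠ 0, then |u(x̄)| ≥ (α/β)^{1/(p−2)}.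 -/
/-!
Suppose `u(x₀) > 0` lies below `(α/β)^{1/(p-2)}`. Near `x₀` the equation gives
`u'' ≥ (α - β u(x₀)^{p-2}) u ≥ c > 0` almost everywhere, and since `u'` is Lipschitz, hence
absolutely continuous, `u'` is the integral of `u''`. Starting from `u'(x₀) = 0`, `u'` is then
positive to the right of `x₀`, so `u` increases strictly there, which contradicts the maximality
of `|u(x₀)|`. The case `u(x₀) < 0` follows by applying this to `-u`.
-/

open MeasureTheory Set Filter Topology

theorem AbsolutelyContinuousOnInterval.mul_sub_le_sub_of_ae_le_deriv {f : ℝ → ℝ} {a b c : ℝ}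
    (hf : AbsolutelyContinuousOnInterval f a b) (hab : a ≤ b)
    (h : ∀ᵐ x, x ∈ Icc a b → c ≤ deriv f x) :
    c * (b - a) ≤ f b - f a := by
  have hle : (fun _ => c) ≤ᵐ[volume.restrict (Icc a b)] deriv f :=
    (ae_restrict_iff' measurableSet_Icc).2 h
  calc c * (b - a) = ∫ _ in a..b, c := by simp [mul_comm]
    _ ≤ ∫ x in a..b, deriv f x :=
      intervalIntegral.integral_mono_ae_restrict hab intervalIntegrable_const
        hf.intervalIntegrable_deriv hle
    _ = f b - f a := hf.integral_deriv_eq_sub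

theorem strictMonoOn_Icc_of_ae_le_deriv_deriv {u u' : ℝ → ℝ} {a b c : ℝ} {K : NNReal}
    (hc : 0 < c) (hu : ∀ x ∈ Icc a b, HasDerivAt u (u' x) x)
    (hu' : LipschitzOnWith K u' (Icc a b)) (ha : 0 ≤ u' a)
    (h : ∀ᵐ x, x ∈ Icc a b → c ≤ deriv u' x) :
    StrictMonoOn u (Icc a b) := by
  refine strictMonoOn_of_deriv_pos (convex_Icc a b)
    (fun x hx => (hu x hx).continuousAt.continuousWithinAt) fun x hx => ?_
  rw [interior_Icc] at hx
  have hsub : Icc a x ⊆ Icc a b := Icc_subset_Icc_right hx.2.le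
  have hac : AbsolutelyContinuousOnInterval u' a x :=
    (hu'.mono (uIcc_of_le hx.1.le ▸ hsub)).absolutelyContinuousOnInterval
  have hgrowth := hac.mul_sub_le_sub_of_ae_le_deriv hx.1.le
    (by filter_upwards [h] with y hy hyx using hy (hsub hyx))
  rw [(hu x (Ioo_subset_Icc_self hx)).deriv]
  nlinarith [hx.1]

theorem mul_le_of_neg_add_mul_eq_mul_rpow {p α β w r y v m : ℝ} (hp : 2 ≤ p)
    (hw : α ≤ w) (hr : 0 ≤ r ∧ r ≤ β) (hy : 0 ≤ y) (hym : y ≤ m)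
    (heq : -v + w * y = r * (|y| ^ (p - 2) * y)) :
    (α - β * m ^ (p - 2)) * y ≤ v := by
  have hpow : |y| ^ (p - 2) ≤ m ^ (p - 2) :=
    Real.rpow_le_rpow (abs_nonneg y) (by rwa [abs_of_nonneg hy]) (by linarith)
  have hnonlin : r * (|y| ^ (p - 2) * y) ≤ β * (m ^ (p - 2) * y) :=
    mul_le_mul hr.2 (mul_le_mul_of_nonneg_right hpow hy) (by positivity) (hr.1.trans hr.2)
  nlinarith [mul_le_mul_of_nonneg_right hw hy]

theorem rpow_div_le_of_isLocalMax_abs_of_pos {p α β : ℝ} {W ρ u u' u'' : ℝ → ℝ} {x₀ : ℝ}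
    (hp : 2 < p) (hα : 0 < α) (hβ : 0 < β)
    (hW : ∀ᵐ x, α ≤ W x) (hρ : ∀ᵐ x, 0 ≤ ρ x ∧ ρ x ≤ β)
    (hu : ∀ x, HasDerivAt u (u' x) x) (hu'lip : LocallyLipschitz u')
    (hu'' : ∀ᵐ x, HasDerivAt u' (u'' x) x)
    (heq : ∀ᵐ x, -u'' x + W x * u x = ρ x * (|u x| ^ (p - 2) * u x))
    (hmax : IsLocalMax (fun x => |u x|) x₀) (hpos : 0 < u x₀) :
    (α / β) ^ (1 / (p - 2)) ≤ u x₀ := by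
  by_contra! hlt
  have hgap : 0 < α - β * u x₀ ^ (p - 2) := by
    rw [one_div, Real.lt_rpow_inv_iff_of_pos hpos.le (by positivity) (by linarith),
      lt_div_iff₀ hβ] at hlt
    linarith
  have hlocmax : IsLocalMax u x₀ := hmax.mono fun y hy => by
    simpa [abs_of_pos hpos] using (le_abs_self (u y)).trans hy
  obtain ⟨K, t, ht, hKt⟩ := hu'lip x₀
  have hnear : ∀ᶠ x in 𝓝 x₀, x ∈ t ∧ |u x| ≤ u x₀ ∧ u x₀ / 2 < u x := by
    filter_upwards [ht, hmax, (hu x₀).continuousAt.eventually_const_lt (by linarith : u x₀ / 2 < u x₀)]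
      with x hxt hxmax hxpos
    exact ⟨hxt, abs_of_pos hpos ▸ hxmax, hxpos⟩
  obtain ⟨b, hb, hIcc⟩ := mem_nhdsGE_iff_exists_Icc_subset.1 (nhdsWithin_le_nhds hnear)
  have hsecond : ∀ᵐ x, x ∈ Icc x₀ b →
      (α - β * u x₀ ^ (p - 2)) * (u x₀ / 2) ≤ deriv u' x := by
    filter_upwards [hW, hρ, hu'', heq] with x hWx hρx hu''x heqx hx
    obtain ⟨-, hxmax, hxpos⟩ := hIcc hx
    have hbound := mul_le_of_neg_add_mul_eq_mul_rpow hp.le hWx hρx (by linarith)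
      ((le_abs_self _).trans hxmax) heqx
    rw [hu''x.deriv]
    nlinarith
  have hmono := strictMonoOn_Icc_of_ae_le_deriv_deriv (by positivity) (fun x _ => hu x)
    (hKt.mono fun x hx => (hIcc hx).1) (hlocmax.hasDerivAt_eq_zero (hu x₀)).ge hsecond
  have hinc : u x₀ < u b := hmono (left_mem_Icc.2 hb.le) (right_mem_Icc.2 hb.le) hb
  linarith [le_abs_self (u b), (hIcc (right_mem_Icc.2 hb.le)).2.1]

theorem stmt_9_general (p α β : ℝ) (hp : 2 < p) (hα : 0 < α) (hβ : 0 < β)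
    (W ρ : ℝ → ℝ)
    (hW : ∀ᵐ x ∂(volume : Measure ℝ), α ≤ W x)
    (hρ : ∀ᵐ x ∂(volume : Measure ℝ), 0 ≤ ρ x ∧ ρ x ≤ β)
    (u u' u'' : ℝ → ℝ)
    (hu : ∀ x, HasDerivAt u (u' x) x)
    (hu'lip : LocallyLipschitz u')
    (hu'' : ∀ᵐ x ∂(volume : Measure ℝ), HasDerivAt u' (u'' x) x)
    (heq : ∀ᵐ x ∂(volume : Measure ℝ),
      -u'' x + W x * u x = ρ x * (|u x| ^ (p - 2) * u x))
    (x₀ δ : ℝ) (hδ : 0 < δ)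
    (hmax : ∀ y, |y - x₀| ≤ δ → |u y| ≤ |u x₀|)
    (hne : u x₀ ≠ 0) :
    (α / β) ^ (1 / (p - 2)) ≤ |u x₀| := by
  have hlocmax : IsLocalMax (fun x => |u x|) x₀ :=
    eventually_of_mem (Metric.closedBall_mem_nhds x₀ hδ) fun y hy =>
      hmax y (by rwa [Metric.mem_closedBall, Real.dist_eq] at hy)
  rcases hne.lt_or_gt with hneg | hpos
  · rw [abs_of_neg hneg]
    refine rpow_div_le_of_isLocalMax_abs_of_pos hp hα hβ hW hρ (u := -u) (u' := -u')
      (u'' := -u'') (fun x => (hu x).neg) (isometry_neg.lipschitz.locallyLipschitz.comp hu'lip)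
      (by filter_upwards [hu''] with x hx using hx.neg) ?_ (by simpa [abs_neg] using hlocmax)
      (neg_pos.2 hneg)
    filter_upwards [heq] with x hx
    simp only [Pi.neg_apply, abs_neg]
    linarith
  · rw [abs_of_pos hpos]
    exact rpow_div_le_of_isLocalMax_abs_of_pos hp hα hβ hW hρ hu hu'lip hu'' heq hlocmax hpos

/-- Lower bound on nonzero local maxima of `|u|` for solutions of
`−u″ + W u = ρ |u|^{p−2} u` with `W ≥ α > 0` and `0 ≤ ρ ≤ β` a.e. -/
theorem stmt_9 (p α β : ℝ) (hp : 2 < p) (hα : 0 < α) (hβ : 0 < β)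
    (W ρ : ℝ → ℝ) (hWmeas : Measurable W) (hρmeas : Measurable ρ)
    (hW : ∀ᵐ x ∂(volume : Measure ℝ), α ≤ W x)
    (hρ : ∀ᵐ x ∂(volume : Measure ℝ), 0 ≤ ρ x ∧ ρ x ≤ β)
    (u u' u'' : ℝ → ℝ)
    (hu : ∀ x, HasDerivAt u (u' x) x)
    (hu'cont : Continuous u')
    (hu'lip : LocallyLipschitz u')
    (hu'' : ∀ᵐ x ∂(volume : Measure ℝ), HasDerivAt u' (u'' x) x)
    (heq : ∀ᵐ x ∂(volume : Measure ℝ),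
      -u'' x + W x * u x = ρ x * (|u x| ^ (p - 2) * u x))
    (x₀ δ : ℝ) (hδ : 0 < δ)
    (hmax : ∀ y, |y - x₀| ≤ δ → |u y| ≤ |u x₀|)
    (hne : u x₀ ≠ 0) :
    (α / β) ^ (1 / (p - 2)) ≤ |u x₀| :=
  stmt_9_general p α β hp hα hβ W ρ hW hρ u u' u'' hu hu'lip hu'' heq x₀ δ hδ hmax hne
end

section
/- Let W : [0, ∞) → ℝ be measurable with W(x) ≥ 0 for almost every x ≥ 0, and let φ : [0, ∞) → ℝ be continuously differentiable with locally Lipschitz derivative and satisfy −φ″(x) + W(x)·φ(x) ≥ 0 for almost every x ≥ 0 (φ″ being the almost-everywhere derivative of φ′). Then exactly one of the following holds: either φ(x) ≥ min(φ(0), 0) for every x ≥ 0, or φ(x) → −∞ as x → +∞. In particular, if φ is bounded below and inf_{[0,∞)} φ < 0, then inf_{[0,∞)} φ = φ(0). -/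
/-!
Where `φ ≤ 0` the inequality gives `φ″ ≤ W φ ≤ 0` a.e.; as `φ′` is locally Lipschitz, hence
absolutely continuous, it is nonincreasing there, so `φ` is concave on every interval of
`[0, ∞)` on which it is nonpositive. If `φ x₀ < min (φ 0) 0`, let `a < x₀` be the last point
with `φ a ≥ 0`, or `a = 0`; then `φ a > φ x₀`. The function cannot become nonnegative again
after `x₀`, for `x₀` would then lie between two points with larger values on an interval of
concavity. Hence `φ < 0` on `(a, ∞)`, and concavity keeps `φ` below the chord through `a` and
`x₀`, whose slope is negative.
-/

open MeasureTheory Set Filter Topology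
open scoped NNReal

theorem LipschitzOnWith.antitoneOn_of_ae_deriv_nonpos {g : ℝ → ℝ} {K : ℝ≥0} {a b : ℝ}
    (hg : LipschitzOnWith K g (Icc a b))
    (hg' : ∀ᵐ x ∂volume.restrict (Icc a b), deriv g x ≤ 0) :
    AntitoneOn g (Icc a b) := by
  intro x hx y hy hxy
  have hsub : Icc x y ⊆ Icc a b := Icc_subset_Icc hx.1 hy.2
  have hac := ((hg.mono hsub).mono (uIcc_of_le hxy).subset).absolutelyContinuousOnInterval
  have hint : 0 ≤ ∫ t in x..y, -deriv g t :=
    intervalIntegral.integral_nonneg_of_ae_restrict hxy <| by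
      filter_upwards [ae_restrict_of_ae_restrict_of_subset hsub hg'] with t ht
      exact neg_nonneg.mpr ht
  rw [intervalIntegral.integral_neg, hac.integral_deriv_eq_sub] at hint
  linarith

def ConcaveWhereNonpos (f : ℝ → ℝ) : Prop :=
  ∀ a b, 0 ≤ a → (∀ x ∈ Ioo a b, f x ≤ 0) → ConcaveOn ℝ (Icc a b) f

theorem concaveWhereNonpos_of_supersolution {W φ φ' φ'' : ℝ → ℝ}
    (hW : ∀ᵐ x ∂(volume.restrict (Ici (0 : ℝ))), 0 ≤ W x)
    (hφ : ∀ x ∈ Ici (0 : ℝ), HasDerivWithinAt φ (φ' x) (Ici 0) x)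
    (hφ'lip : ∀ R > (0 : ℝ), ∃ K, LipschitzOnWith K φ' (Icc 0 R))
    (hφ'' : ∀ᵐ x ∂(volume.restrict (Ici (0 : ℝ))), HasDerivAt φ' (φ'' x) x)
    (hineq : ∀ᵐ x ∂(volume.restrict (Ici (0 : ℝ))), 0 ≤ -φ'' x + W x * φ x) :
    ConcaveWhereNonpos φ := by
  intro a b ha hneg
  have hsub : Icc a b ⊆ Ici 0 := fun x hx => ha.trans hx.1
  have hderiv : ∀ x ∈ Ioo a b, HasDerivAt φ (φ' x) x := fun x hx =>
    (hφ x (hsub (Ioo_subset_Icc_self hx))).hasDerivAt (Ici_mem_nhds (ha.trans_lt hx.1))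
  refine AntitoneOn.concaveOn_of_deriv (convex_Icc a b)
    (fun x hx => (hφ x (hsub hx)).continuousWithinAt.mono hsub) ?_ ?_ <;> rw [interior_Icc]
  · exact fun x hx => (hderiv x hx).differentiableAt.differentiableWithinAt
  intro x hx y hy hxy
  rw [(hderiv x hx).deriv, (hderiv y hy).deriv]
  obtain ⟨K, hK⟩ := hφ'lip y (ha.trans_lt hy.1)
  have hxy_sub : Icc x y ⊆ Ici 0 := (Icc_subset_Icc hx.1.le hy.2.le).trans hsub
  have hφ''_nonpos : ∀ᵐ t ∂volume.restrict (Icc x y), deriv φ' t ≤ 0 := by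
    filter_upwards [ae_restrict_of_ae_restrict_of_subset hxy_sub hW,
      ae_restrict_of_ae_restrict_of_subset hxy_sub hφ'',
      ae_restrict_of_ae_restrict_of_subset hxy_sub hineq, ae_restrict_mem measurableSet_Icc]
      with t hWt hφ''t hineqt ht
    have hφt : φ t ≤ 0 := hneg t ⟨hx.1.trans_le ht.1, ht.2.trans_lt hy.2⟩
    rw [hφ''t.deriv]
    nlinarith
  exact (hK.mono (Icc_subset_Icc_left (ha.trans hx.1.le))).antitoneOn_of_ae_deriv_nonpos
    hφ''_nonpos ⟨le_rfl, hxy⟩ ⟨hxy, le_rfl⟩ hxy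

theorem exists_nonneg_forall_Ioc_neg {f : ℝ → ℝ} {p q : ℝ} (hf : ContinuousOn f (Icc p q))
    (h : ∃ x ∈ Icc p q, 0 ≤ f x) :
    ∃ c ∈ Icc p q, 0 ≤ f c ∧ ∀ x ∈ Ioc c q, f x < 0 := by
  set S := Icc p q ∩ f ⁻¹' Ici 0
  have hS : IsClosed S := hf.preimage_isClosed_of_isClosed isClosed_Icc isClosed_Ici
  have hSbdd : BddAbove S := bddAbove_Icc.mono inter_subset_left
  obtain ⟨hc, hfc⟩ := hS.csSup_mem h hSbdd
  refine ⟨sSup S, hc, hfc, fun x hx => not_le.1 fun hfx => ?_⟩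
  exact hx.1.not_ge (le_csSup hSbdd ⟨⟨hc.1.trans hx.1.le, hx.2⟩, hfx⟩)

theorem exists_nonneg_forall_Ico_neg {f : ℝ → ℝ} {p q : ℝ} (hf : ContinuousOn f (Icc p q))
    (h : ∃ x ∈ Icc p q, 0 ≤ f x) :
    ∃ c ∈ Icc p q, 0 ≤ f c ∧ ∀ x ∈ Ico p c, f x < 0 := by
  set S := Icc p q ∩ f ⁻¹' Ici 0
  have hS : IsClosed S := hf.preimage_isClosed_of_isClosed isClosed_Icc isClosed_Ici
  have hSbdd : BddBelow S := bddBelow_Icc.mono inter_subset_left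
  obtain ⟨hc, hfc⟩ := hS.csInf_mem h hSbdd
  refine ⟨sInf S, hc, hfc, fun x hx => not_le.1 fun hfx => ?_⟩
  exact hx.2.not_ge (csInf_le hSbdd ⟨⟨hx.1, hx.2.le.trans hc.2⟩, hfx⟩)

section
variable {f : ℝ → ℝ} {a x₀ : ℝ}

theorem exists_lt_forall_Ioc_neg (hf : ContinuousOn f (Ici 0)) (hx₀ : 0 ≤ x₀)
    (hlt : f x₀ < min (f 0) 0) :
    ∃ a, 0 ≤ a ∧ a < x₀ ∧ f x₀ < f a ∧ ∀ x ∈ Ioc a x₀, f x < 0 := by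
  obtain ⟨hltf0, hlt0⟩ := lt_min_iff.1 hlt
  by_cases h : ∃ x ∈ Icc 0 x₀, 0 ≤ f x
  · obtain ⟨a, ha, hfa, hneg⟩ := exists_nonneg_forall_Ioc_neg (hf.mono Icc_subset_Ici_self) h
    exact ⟨a, ha.1, ha.2.lt_of_ne (by rintro rfl; linarith), by linarith, hneg⟩
  · push Not at h
    exact ⟨0, le_rfl, hx₀.lt_of_ne (by rintro rfl; linarith), hltf0,
      fun x hx => h x (Ioc_subset_Icc_self hx)⟩

theorem ConcaveWhereNonpos.forall_Ioi_neg (hconc : ConcaveWhereNonpos f)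
    (hf : ContinuousOn f (Ici 0)) (ha : 0 ≤ a) (hax₀ : a < x₀) (hfa : f x₀ < f a)
    (hneg : ∀ x ∈ Ioc a x₀, f x < 0) : ∀ x ∈ Ioi a, f x < 0 := by
  intro x hx
  rcases le_or_gt x x₀ with hxx₀ | hx₀x
  · exact hneg x ⟨hx, hxx₀⟩
  by_contra! hfx
  obtain ⟨b, hb, hfb, hnegb⟩ := exists_nonneg_forall_Ico_neg
    (hf.mono (Icc_subset_Ici_self.trans (Ici_subset_Ici.2 (ha.trans hax₀.le))))
    ⟨x, right_mem_Icc.2 hx₀x.le, hfx⟩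
  have hnonpos : ∀ y ∈ Ioo a b, f y ≤ 0 := fun y hy =>
    (le_or_gt y x₀).elim (fun h => (hneg y ⟨hy.1, h⟩).le)
      (fun h => (hnegb y ⟨h.le, hy.2⟩).le)
  have hab : a ≤ b := hax₀.le.trans hb.1
  have hmin := (hconc a b ha hnonpos).min_le_of_mem_Icc (left_mem_Icc.2 hab)
    (right_mem_Icc.2 hab) ⟨hax₀.le, hb.1⟩
  have := hneg x₀ ⟨hax₀, le_rfl⟩
  rcases min_le_iff.1 hmin with h | h <;> linarith

theorem ConcaveWhereNonpos.tendsto_atBot (hconc : ConcaveWhereNonpos f) (ha : 0 ≤ a)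
    (hax₀ : a < x₀) (hfa : f x₀ < f a) (hneg : ∀ x ∈ Ioi a, f x < 0) :
    Tendsto f atTop atBot := by
  set s := (f x₀ - f a) / (x₀ - a)
  have hs : s < 0 := div_neg_of_neg_of_pos (by linarith) (by linarith)
  have hle : ∀ x ∈ Ioi x₀, f x ≤ f x₀ + s * (x - x₀) := by
    intro x hx
    have hslope := (hconc a x ha fun y hy => (hneg y hy.1).le).slope_anti_adjacent
      (left_mem_Icc.2 (hax₀.trans hx).le) (right_mem_Icc.2 (hax₀.trans hx).le) hax₀ hx
    rw [div_le_iff₀ (sub_pos.2 hx)] at hslope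
    linarith
  have hline : Tendsto (fun x => f x₀ + s * (x - x₀)) atTop atBot :=
    tendsto_atBot_add_const_left _ _
      ((tendsto_atTop_add_const_right _ _ tendsto_id).const_mul_atTop_of_neg hs)
  exact tendsto_atBot_mono' atTop (eventually_gt_atTop x₀ |>.mono hle) hline

theorem ConcaveWhereNonpos.tendsto_atBot_of_lt_min (hconc : ConcaveWhereNonpos f)
    (hf : ContinuousOn f (Ici 0)) (hx₀ : 0 ≤ x₀) (hlt : f x₀ < min (f 0) 0) :
    Tendsto f atTop atBot := by
  obtain ⟨a, ha, hax₀, hfa, hneg⟩ := exists_lt_forall_Ioc_neg hf hx₀ hlt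
  exact hconc.tendsto_atBot ha hax₀ hfa (hconc.forall_Ioi_neg hf ha hax₀ hfa hneg)

end

theorem not_tendsto_atBot_of_bddBelow_image_Ici {f : ℝ → ℝ} {c : ℝ}
    (h : BddBelow (f '' Ici c)) :
    ¬Tendsto f atTop atBot := by
  intro hT
  obtain ⟨m, hm⟩ := h
  obtain ⟨x, hx, hxc⟩ := ((hT.eventually_lt_atBot m).and (eventually_ge_atTop c)).exists
  exact (hm (mem_image_of_mem f hxc)).not_gt hx

theorem stmt_10_general (W : ℝ → ℝ)
    (hW : ∀ᵐ x ∂(volume.restrict (Set.Ici (0 : ℝ))), 0 ≤ W x)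
    (φ φ' φ'' : ℝ → ℝ)
    (hφ : ∀ x ∈ Set.Ici (0 : ℝ), HasDerivWithinAt φ (φ' x) (Set.Ici 0) x)
    (hφ'lip : ∀ R > (0 : ℝ), ∃ K, LipschitzOnWith K φ' (Set.Icc 0 R))
    (hφ'' : ∀ᵐ x ∂(volume.restrict (Set.Ici (0 : ℝ))), HasDerivAt φ' (φ'' x) x)
    (hineq : ∀ᵐ x ∂(volume.restrict (Set.Ici (0 : ℝ))),
      0 ≤ -φ'' x + W x * φ x) :
    Xor' (∀ x ≥ (0 : ℝ), min (φ 0) 0 ≤ φ x)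
      (Filter.Tendsto φ Filter.atTop Filter.atBot) ∧
    (BddBelow (φ '' Set.Ici 0) → sInf (φ '' Set.Ici 0) < 0 →
      sInf (φ '' Set.Ici 0) = φ 0) := by
  have hcont : ContinuousOn φ (Ici 0) := fun x hx => (hφ x hx).continuousWithinAt
  have hconc := concaveWhereNonpos_of_supersolution hW hφ hφ'lip hφ'' hineq
  have hdecay : ¬(∀ x ≥ (0 : ℝ), min (φ 0) 0 ≤ φ x) → Tendsto φ atTop atBot := by
    push Not
    rintro ⟨x₀, hx₀, hlt⟩
    exact hconc.tendsto_atBot_of_lt_min hcont hx₀ hlt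
  have hlower (hP : ∀ x ≥ (0 : ℝ), min (φ 0) 0 ≤ φ x) :
      min (φ 0) 0 ∈ lowerBounds (φ '' Ici 0) := by
    rintro _ ⟨x, hx, rfl⟩
    exact hP x hx
  refine ⟨?_, fun hb hinf => ?_⟩
  · by_cases hP : ∀ x ≥ (0 : ℝ), min (φ 0) 0 ≤ φ x
    · exact Or.inl ⟨hP, not_tendsto_atBot_of_bddBelow_image_Ici ⟨_, hlower hP⟩⟩
    · exact Or.inr ⟨hdecay hP, hP⟩
  have hP := not_not.1 (mt hdecay (not_tendsto_atBot_of_bddBelow_image_Ici hb))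
  have hlow : min (φ 0) 0 ≤ sInf (φ '' Ici 0) :=
    le_csInf ⟨φ 0, 0, self_mem_Ici, rfl⟩ (hlower hP)
  have hup : sInf (φ '' Ici 0) ≤ φ 0 := csInf_le hb ⟨0, self_mem_Ici, rfl⟩
  rcases min_cases (φ 0) 0 with ⟨h, -⟩ | ⟨h, -⟩ <;> rw [h] at hlow <;> linarith

/-- Maximum principle on the half-line `[0, ∞)` for `φ ↦ −φ″ + W φ`
with `W ≥ 0` a.e.: either `φ ≥ min (φ 0) 0` everywhere on `[0, ∞)`,
or `φ → −∞` at infinity — and exactly one of these occurs.  In particular,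
if `φ` is bounded below on `[0, ∞)` with negative infimum, the infimum
is attained at `0`. -/
theorem stmt_10 (W : ℝ → ℝ) (hWmeas : Measurable W)
    (hW : ∀ᵐ x ∂(volume.restrict (Set.Ici (0 : ℝ))), 0 ≤ W x)
    (φ φ' φ'' : ℝ → ℝ)
    (hφ : ∀ x ∈ Set.Ici (0 : ℝ), HasDerivWithinAt φ (φ' x) (Set.Ici 0) x)
    (hφ'cont : ContinuousOn φ' (Set.Ici 0))
    (hφ'lip : ∀ R > (0 : ℝ), ∃ K, LipschitzOnWith K φ' (Set.Icc 0 R))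
    (hφ'' : ∀ᵐ x ∂(volume.restrict (Set.Ici (0 : ℝ))), HasDerivAt φ' (φ'' x) x)
    (hineq : ∀ᵐ x ∂(volume.restrict (Set.Ici (0 : ℝ))),
      0 ≤ -φ'' x + W x * φ x) :
    Xor' (∀ x ≥ (0 : ℝ), min (φ 0) 0 ≤ φ x)
      (Filter.Tendsto φ Filter.atTop Filter.atBot) ∧
    (BddBelow (φ '' Set.Ici 0) → sInf (φ '' Set.Ici 0) < 0 →
      sInf (φ '' Set.Ici 0) = φ 0) :=
  stmt_10_general W hW φ φ' φ'' hφ hφ'lip hφ'' hineq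
end

section
/- Let p > 2 and let W, ρ : ℝ → ℝ be bounded measurable functions with W(x) ≥ 0 and ρ(x) ≥ 0 for almost every x. Let u : ℝ → ℝ be continuously differentiable with locally Lipschitz derivative and satisfy −u″(x) + W(x)·u(x) = ρ(x)·|u(x)|^{p−2}·u(x) for almost every x ∈ ℝ. If u has finite Morse index, then u is stable outside a compact set: there exists R > 0 such that Q_u(φ) ≥ 0 for every test function φ whose support is contained in ℝ ∖ [−R, R]. -/
/-! If `u` were unstable outside every compact set, one could choose test functions with
negative quadratic form whose supports escape, one after another, the union of the supports
already chosen. On functions with pairwise disjoint supports the form is diagonal,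
`Q(∑ cᵢ φᵢ) = ∑ cᵢ² Q(φᵢ)`, so such functions span negative subspaces of every dimension,
against the finiteness of the Morse index. -/

open MeasureTheory Set Filter

/-- A test function: a Lipschitz function `ℝ → ℝ` with compact support. -/
def IsTestFun (φ : ℝ → ℝ) : Prop :=
  (∃ K, LipschitzWith K φ) ∧ HasCompactSupport φ

/-- The quadratic form associated to the linearization of
`−u″ + W u = ρ |u|^{p−2} u` at the solution `u`. -/
noncomputable def quadForm (p : ℝ) (W ρ u φ : ℝ → ℝ) : ℝ :=
  ∫ x : ℝ, ((deriv φ x) ^ 2 + W x * (φ x) ^ 2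
    - (p - 1) * ρ x * |u x| ^ (p - 2) * (φ x) ^ 2)

/-- The Morse index of `u` is at least `m`: there are `m` linearly
independent test functions on whose span the quadratic form is negative. -/
def MorseIndexGE (p : ℝ) (W ρ u : ℝ → ℝ) (m : ℕ) : Prop :=
  ∃ φ : Fin m → ℝ → ℝ, (∀ i, IsTestFun (φ i)) ∧ LinearIndependent ℝ φ ∧
    ∀ c : Fin m → ℝ, (∑ i, c i • φ i) ≠ 0 →
      quadForm p W ρ u (∑ i, c i • φ i) < 0

open Function Topology

lemma MeasureTheory.LocallyIntegrable.of_ae_nonneg_of_ae_le {X : Type*} [TopologicalSpace X]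
    [MeasurableSpace X] {μ : Measure X} [IsLocallyFiniteMeasure μ] {f : X → ℝ} {C : ℝ}
    (hf : AEStronglyMeasurable f μ) (h0 : ∀ᵐ x ∂μ, 0 ≤ f x) (hC : ∀ᵐ x ∂μ, f x ≤ C) :
    LocallyIntegrable f μ := by
  refine (memLp_top_of_bound hf C ?_).locallyIntegrable le_top
  filter_upwards [h0, hC] with x hx0 hxC
  rwa [Real.norm_of_nonneg hx0]

lemma linearIndependent_of_pairwise_disjoint_support {ι α R : Type*} [Ring R] [NoZeroDivisors R]
    {f : ι → α → R} (hne : ∀ i, f i ≠ 0)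
    (hdisj : Pairwise (Disjoint on fun i => support (f i))) :
    LinearIndependent R f := by
  rw [linearIndependent_iff']
  intro s g hsum i hi
  obtain ⟨x, hx⟩ := Function.ne_iff.mp (hne i)
  have hsum_x := congrFun hsum x
  simp only [Finset.sum_apply, Pi.smul_apply, smul_eq_mul, Pi.zero_apply] at hsum_x
  rw [Finset.sum_eq_single_of_mem i hi fun j _ hji =>
    by rw [notMem_support.mp (Set.disjoint_right.mp (hdisj hji) hx), mul_zero]] at hsum_x
  exact (mul_eq_zero.mp hsum_x).resolve_right hx

theorem exists_pairwise_disjoint_tsupport {X M : Type*} [TopologicalSpace X] [Zero M]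
    {P : (X → M) → Prop} (hP : ∀ φ, P φ → HasCompactSupport φ)
    (hescape : ∀ K, IsCompact K → ∃ φ, P φ ∧ Disjoint (tsupport φ) K) (m : ℕ) :
    ∃ Φ : Fin m → X → M, (∀ i, P (Φ i)) ∧ Pairwise (Disjoint on fun i => tsupport (Φ i)) := by
  induction m with
  | zero => exact ⟨Fin.elim0, fun i => i.elim0, fun i => i.elim0⟩
  | succ m ih =>
    obtain ⟨Φ, hPΦ, hdisj⟩ := ih
    obtain ⟨φ, hφ, hφΦ⟩ :=
      hescape (⋃ i, tsupport (Φ i)) (isCompact_iUnion fun i => hP _ (hPΦ i))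
    have hφΦ' (j : Fin m) : Disjoint (tsupport φ) (tsupport (Φ j)) :=
      hφΦ.mono_right (subset_iUnion (fun i => tsupport (Φ i)) j)
    refine ⟨Fin.cons φ Φ, Fin.cases hφ hPΦ, fun i j hij => ?_⟩
    cases i using Fin.cases <;> cases j using Fin.cases <;>
      simp only [onFun, Fin.cons_zero, Fin.cons_succ]
    · exact absurd rfl hij
    · exact hφΦ' _
    · exact (hφΦ' _).symm
    · exact hdisj fun h => hij (congrArg _ h)

lemma exists_forall_ne_eventuallyEq_zero {ι X M : Type*} [Nonempty ι] [TopologicalSpace X]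
    [Zero M] {Φ : ι → X → M} (hdisj : Pairwise (Disjoint on fun i => tsupport (Φ i)))
    (x : X) :
    ∃ i, ∀ j ≠ i, Φ j =ᶠ[𝓝 x] 0 := by
  by_cases hx : ∃ i, x ∈ tsupport (Φ i)
  · obtain ⟨i, hi⟩ := hx
    exact ⟨i, fun j hji =>
      notMem_tsupport_iff_eventuallyEq.mp (Set.disjoint_right.mp (hdisj hji) hi)⟩
  · push Not at hx
    exact ⟨Classical.arbitrary ι, fun j _ => notMem_tsupport_iff_eventuallyEq.mp (hx j)⟩

noncomputable def schrodingerIntegrand (V φ : ℝ → ℝ) (x : ℝ) : ℝ :=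
  deriv φ x ^ 2 + V x * φ x ^ 2

noncomputable def schrodingerForm (V φ : ℝ → ℝ) : ℝ :=
  ∫ x, schrodingerIntegrand V φ x

lemma schrodingerForm_zero (V : ℝ → ℝ) : schrodingerForm V 0 = 0 := by
  simp [schrodingerForm, schrodingerIntegrand]

lemma schrodingerIntegrand_sum_smul_of_pairwise_disjoint {ι : Type*} [Fintype ι]
    {Φ : ι → ℝ → ℝ} (hdisj : Pairwise (Disjoint on fun i => tsupport (Φ i))) (V : ℝ → ℝ)
    (c : ι → ℝ) (x : ℝ) :
    schrodingerIntegrand V (∑ i, c i • Φ i) x = ∑ i, c i ^ 2 * schrodingerIntegrand V (Φ i) x := by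
  unfold schrodingerIntegrand
  cases isEmpty_or_nonempty ι
  · simp
  obtain ⟨i, hi⟩ := exists_forall_ne_eventuallyEq_zero hdisj x
  have hothers : ∀ᶠ y in 𝓝 x, ∀ j ≠ i, Φ j y = 0 :=
    eventually_all.mpr fun j => eventually_imp_distrib_left.mpr (hi j)
  have hsum : ∑ j, c j • Φ j =ᶠ[𝓝 x] fun y => c i * Φ i y := by
    filter_upwards [hothers] with y hy
    simp only [Finset.sum_apply, Pi.smul_apply, smul_eq_mul]
    exact Finset.sum_eq_single i (fun j _ hji => by simp [hy j hji]) (by simp)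
  rw [hsum.deriv_eq, hsum.eq_of_nhds, deriv_const_mul_field,
    Finset.sum_eq_single i
      (fun j _ hji => by simp [(hi j hji).eq_of_nhds, (hi j hji).deriv_eq]) (by simp)]
  ring

theorem schrodingerForm_sum_smul_of_pairwise_disjoint {ι : Type*} [Fintype ι] {V : ℝ → ℝ}
    {Φ : ι → ℝ → ℝ} (hdisj : Pairwise (Disjoint on fun i => tsupport (Φ i)))
    (hint : ∀ i, Integrable (schrodingerIntegrand V (Φ i))) (c : ι → ℝ) :
    schrodingerForm V (∑ i, c i • Φ i) = ∑ i, c i ^ 2 * schrodingerForm V (Φ i) := by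
  simp only [schrodingerForm, schrodingerIntegrand_sum_smul_of_pairwise_disjoint hdisj]
  rw [integral_finsetSum _ fun i _ => (hint i).const_mul _]
  simp only [integral_const_mul]

lemma IsTestFun.integrable_schrodingerIntegrand {V φ : ℝ → ℝ} (hV : LocallyIntegrable V)
    (hφ : IsTestFun φ) : Integrable (schrodingerIntegrand V φ) := by
  obtain ⟨⟨K, hK⟩, hcs⟩ := hφ
  have hderiv : MemLp (deriv φ) 2 :=
    hcs.deriv.memLp_of_bound (measurable_deriv φ).aestronglyMeasurable K
      (ae_of_all _ fun _ => norm_deriv_le_of_lipschitz hK)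
  have hpot : Integrable fun x => φ x ^ 2 • V x :=
    hV.integrable_smul_left_of_hasCompactSupport (hK.continuous.pow 2)
      (hcs.comp_left (g := fun y : ℝ => y ^ 2) (by norm_num))
  exact hderiv.integrable_sq.add (by simpa only [smul_eq_mul, mul_comm] using hpot)

noncomputable def linearizedPotential (p : ℝ) (W ρ u : ℝ → ℝ) (x : ℝ) : ℝ :=
  W x - (p - 1) * ρ x * |u x| ^ (p - 2)

lemma quadForm_eq_schrodingerForm (p : ℝ) (W ρ u φ : ℝ → ℝ) :
    quadForm p W ρ u φ = schrodingerForm (linearizedPotential p W ρ u) φ := by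
  unfold quadForm schrodingerForm schrodingerIntegrand linearizedPotential
  congr 1 with x
  ring

lemma locallyIntegrable_linearizedPotential {p : ℝ} (hp : 2 ≤ p) {W ρ u : ℝ → ℝ}
    (hW : LocallyIntegrable W) (hρ : LocallyIntegrable ρ) (hu : Continuous u) :
    LocallyIntegrable (linearizedPotential p W ρ u) := by
  have hpow : Continuous fun x => |u x| ^ (p - 2) :=
    hu.abs.rpow_const fun _ => Or.inr (by linarith)
  exact hW.sub ((hρ.smul (p - 1)).mul_continuous hpow)

theorem morseIndexGE_of_pairwise_disjoint_tsupport {p : ℝ} {W ρ u : ℝ → ℝ} {m : ℕ}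
    (hV : LocallyIntegrable (linearizedPotential p W ρ u)) (Φ : Fin m → ℝ → ℝ)
    (hΦ : ∀ i, IsTestFun (Φ i) ∧ quadForm p W ρ u (Φ i) < 0)
    (hdisj : Pairwise (Disjoint on fun i => tsupport (Φ i))) :
    MorseIndexGE p W ρ u m := by
  have hne (i : Fin m) : Φ i ≠ 0 := fun h => by
    simpa [h, quadForm_eq_schrodingerForm, schrodingerForm_zero] using (hΦ i).2
  refine ⟨Φ, fun i => (hΦ i).1, linearIndependent_of_pairwise_disjoint_support hne
    (hdisj.mono fun i j h => h.mono (subset_tsupport _) (subset_tsupport _)), fun c hc => ?_⟩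
  obtain ⟨i, hi⟩ : ∃ i, c i ≠ 0 := by
    by_contra! h
    exact hc (by simp [h])
  simp only [quadForm_eq_schrodingerForm] at hΦ ⊢
  rw [schrodingerForm_sum_smul_of_pairwise_disjoint hdisj
    (fun i => (hΦ i).1.integrable_schrodingerIntegrand hV)]
  exact Finset.sum_neg' (fun j _ => mul_nonpos_of_nonneg_of_nonpos (sq_nonneg _) (hΦ j).2.le)
    ⟨i, Finset.mem_univ i, mul_neg_of_pos_of_neg (by positivity) (hΦ i).2⟩

theorem stmt_14_general (p : ℝ) (hp : 2 < p) (W ρ : ℝ → ℝ)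
    (hWmeas : Measurable W) (hρmeas : Measurable ρ)
    (hbdd : ∃ C : ℝ, ∀ᵐ x ∂(volume : Measure ℝ), W x ≤ C ∧ ρ x ≤ C)
    (hW : ∀ᵐ x ∂(volume : Measure ℝ), 0 ≤ W x)
    (hρ : ∀ᵐ x ∂(volume : Measure ℝ), 0 ≤ ρ x)
    (u u' : ℝ → ℝ)
    (hu : ∀ x, HasDerivAt u (u' x) x)
    (hfin : ∃ m : ℕ, ¬ MorseIndexGE p W ρ u (m + 1)) :
    ∃ R : ℝ, 0 < R ∧ ∀ φ : ℝ → ℝ, IsTestFun φ →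
      Function.support φ ⊆ (Set.Icc (-R) R)ᶜ → 0 ≤ quadForm p W ρ u φ := by
  obtain ⟨C, hC⟩ := hbdd
  have hV : LocallyIntegrable (linearizedPotential p W ρ u) :=
    locallyIntegrable_linearizedPotential hp.le
      (.of_ae_nonneg_of_ae_le hWmeas.aestronglyMeasurable hW (hC.mono fun _ h => h.1))
      (.of_ae_nonneg_of_ae_le hρmeas.aestronglyMeasurable hρ (hC.mono fun _ h => h.2))
      (continuous_iff_continuousAt.mpr fun x => (hu x).continuousAt)
  by_contra! hunstable
  have hescape (K : Set ℝ) (hK : IsCompact K) :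
      ∃ φ, (IsTestFun φ ∧ quadForm p W ρ u φ < 0) ∧ Disjoint (tsupport φ) K := by
    obtain ⟨R, hR, hKR⟩ := hK.isBounded.subset_ball_lt 0 0
    obtain ⟨φ, hφ, hsupp, hneg⟩ := hunstable R hR
    have htsupp : tsupport φ ⊆ (Ioo (-R) R)ᶜ :=
      closure_minimal (hsupp.trans (compl_subset_compl.mpr Ioo_subset_Icc_self))
        isOpen_Ioo.isClosed_compl
    rw [Real.ball_eq_Ioo, zero_sub, zero_add] at hKR
    exact ⟨φ, ⟨hφ, hneg⟩, (disjoint_compl_left_iff_subset.mpr hKR).mono_left htsupp⟩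
  obtain ⟨m, hm⟩ := hfin
  obtain ⟨Φ, hΦ, hdisj⟩ :=
    exists_pairwise_disjoint_tsupport (fun φ hφ => hφ.1.2) hescape (m + 1)
  exact hm (morseIndexGE_of_pairwise_disjoint_tsupport hV Φ hΦ hdisj)

/-- A finite Morse index solution of `−u″ + W u = ρ |u|^{p−2} u` on `ℝ`
is stable outside a compact set. -/
theorem stmt_14 (p : ℝ) (hp : 2 < p) (W ρ : ℝ → ℝ)
    (hWmeas : Measurable W) (hρmeas : Measurable ρ)
    (hbdd : ∃ C : ℝ, ∀ᵐ x ∂(volume : Measure ℝ), W x ≤ C ∧ ρ x ≤ C)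
    (hW : ∀ᵐ x ∂(volume : Measure ℝ), 0 ≤ W x)
    (hρ : ∀ᵐ x ∂(volume : Measure ℝ), 0 ≤ ρ x)
    (u u' u'' : ℝ → ℝ)
    (hu : ∀ x, HasDerivAt u (u' x) x)
    (hu'cont : Continuous u') (hu'lip : LocallyLipschitz u')
    (hu'' : ∀ᵐ x ∂(volume : Measure ℝ), HasDerivAt u' (u'' x) x)
    (heq : ∀ᵐ x ∂(volume : Measure ℝ),
      -u'' x + W x * u x = ρ x * (|u x| ^ (p - 2) * u x))
    (hfin : ∃ m : ℕ, ¬ MorseIndexGE p W ρ u (m + 1)) :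
    ∃ R : ℝ, 0 < R ∧ ∀ φ : ℝ → ℝ, IsTestFun φ →
      Function.support φ ⊆ (Set.Icc (-R) R)ᶜ → 0 ≤ quadForm p W ρ u φ :=
  stmt_14_general p hp W ρ hWmeas hρmeas hbdd hW hρ u u' hu hfin
end
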